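/- Let K ⊆ L be a field extension, σ a type, and S a subset of the affine space σ → K. Let ι : (σ → K) → (σ → L) be the coordinatewise inclusion. Then the vanishing ideal of ι(S) in the polynomial ring L[X_s : s ∈ σ] equals the extension, along the coefficient map K[X_s] → L[X_s], of the vanishing ideal of S in K[X_s : s ∈ σ]; that is, every polynomial with coefficients in L vanishing identically on S is an L-linear combination of polynomials with coefficients in K vanishing identically on S. -/

import Mathlib

/-!
Fix a `K`-basis `(bᵢ)` of `L`. Expanding every coefficient of `p ∈ L[X]` in this basis writes
`p = ∑ bᵢ pᵢ` with `pᵢ ∈ K[X]`. At a `K`-rational point `x`, the value `pᵢ(x)` is the `i`-th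
coordinate of `p(x)`, so if `p` vanishes on `S` then so does every `pᵢ`.
-/

namespace MvPolynomial

variable {R S K L ι σ : Type*}

noncomputable def mapCoeffs [CommSemiring R] [CommSemiring S] (f : R →+ S)
    (p : MvPolynomial σ R) : MvPolynomial σ S :=
  AddMonoidAlgebra.map f p

section mapCoeffs

variable [CommSemiring R] [CommSemiring S] (f : R →+ S)

@[simp]
theorem coeff_mapCoeffs (p : MvPolynomial σ R) (m : σ →₀ ℕ) :
    coeff m (mapCoeffs f p) = f (coeff m p) :=
  rfl

@[simp]
theorem mapCoeffs_monomial (m : σ →₀ ℕ) (a : R) :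
    mapCoeffs f (monomial m a) = monomial m (f a) :=
  AddMonoidAlgebra.map_single f a m

@[simp]
theorem mapCoeffs_add (p q : MvPolynomial σ R) :
    mapCoeffs f (p + q) = mapCoeffs f p + mapCoeffs f q :=
  AddMonoidAlgebra.map_add f p q

end mapCoeffs

section Algebra

variable [CommRing K] [CommRing L] [Algebra K L]

theorem aeval_mapCoeffs (f : L →ₗ[K] K) (x : σ → K) (p : MvPolynomial σ L) :
    aeval x (mapCoeffs f.toAddMonoidHom p) = f (aeval (algebraMap K L ∘ x) p) := by
  induction p using induction_on' with
  | monomial m a =>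
    simp only [mapCoeffs_monomial, aeval_monomial, LinearMap.toAddMonoidHom_coe,
      Algebra.algebraMap_self, RingHom.id_apply, Function.comp_apply, ← map_pow,
      ← map_finsuppProd]
    rw [mul_comm a, ← Algebra.smul_def, map_smul, smul_eq_mul, mul_comm]
  | add p q hp hq => simp only [mapCoeffs_add, map_add, hp, hq]

theorem exists_finset_sum_C_mul_map_mapCoeffs (b : Module.Basis ι K L) (p : MvPolynomial σ L) :
    ∃ t : Finset ι,
      ∑ i ∈ t, C (b i) * map (algebraMap K L) (mapCoeffs (b.coord i).toAddMonoidHom p) = p := by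
  classical
  let t := p.support.biUnion fun m => (b.repr (p.coeff m)).support
  refine ⟨t, ?_⟩
  ext n
  have hsupp : (b.repr (p.coeff n)).support ⊆ t := by
    by_cases hn : n ∈ p.support
    · exact Finset.subset_biUnion_of_mem (fun m => (b.repr (p.coeff m)).support) hn
    · simp [notMem_support_iff.mp hn]
  simp only [coeff_sum, coeff_C_mul, coeff_map, coeff_mapCoeffs, LinearMap.toAddMonoidHom_coe,
    Module.Basis.coord_apply, mul_comm (b _), ← Algebra.smul_def]
  rw [← Finsupp.sum_of_support_subset _ hsupp (fun i c => c • b i) fun _ _ => zero_smul K _]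
  exact b.linearCombination_repr _

end Algebra

section Field

variable [Field K] [Field L] [Algebra K L] {S : Set (σ → K)}

theorem map_mem_vanishingIdeal_image {q : MvPolynomial σ K} (hq : q ∈ vanishingIdeal K S) :
    map (algebraMap K L) q ∈ vanishingIdeal L ((algebraMap K L ∘ ·) '' S) := by
  rintro _ ⟨x, hx, rfl⟩
  rw [aeval_map_algebraMap, aeval_algebraMap_apply, hq x hx, map_zero]

theorem mapCoeffs_mem_vanishingIdeal (f : L →ₗ[K] K) {p : MvPolynomial σ L}
    (hp : p ∈ vanishingIdeal L ((algebraMap K L ∘ ·) '' S)) :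
    mapCoeffs f.toAddMonoidHom p ∈ vanishingIdeal K S := fun x hx => by
  rw [aeval_mapCoeffs, hp _ ⟨x, hx, rfl⟩, map_zero]

end Field

end MvPolynomial

/-- **Field-of-definition property of vanishing ideals.**
Let `K ⊆ L` be a field extension, `σ` a type, and `S ⊆ (σ → K)` a set of points of
affine space. Let `ι : (σ → K) → (σ → L)` be the coordinatewise inclusion. Then the
vanishing ideal of `ι(S)` in `L[Xₛ]` equals the extension, along the coefficient map
`K[Xₛ] → L[Xₛ]`, of the vanishing ideal of `S` in `K[Xₛ]`: every polynomial with
coefficients in `L` vanishing on `S` is an `L`-linear combination of polynomials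
with coefficients in `K` vanishing on `S`. -/
theorem vanishingIdeal_image_eq_map (K L : Type*) [Field K] [Field L] [Algebra K L]
    (σ : Type*) (S : Set (σ → K)) :
    MvPolynomial.vanishingIdeal L
        ((fun x : σ → K => fun s : σ => algebraMap K L (x s)) '' S) =
      Ideal.map (MvPolynomial.map (algebraMap K L))
        (MvPolynomial.vanishingIdeal K S) := by
  refine le_antisymm (fun p hp => ?_)
    (Ideal.map_le_iff_le_comap.2 fun q hq => MvPolynomial.map_mem_vanishingIdeal_image hq)
  obtain ⟨t, hpt⟩ :=
    MvPolynomial.exists_finset_sum_C_mul_map_mapCoeffs (Module.Basis.ofVectorSpace K L) p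
  rw [← hpt]
  exact Ideal.sum_mem _ fun i _ => Ideal.mul_mem_left _ _
    (Ideal.mem_map_of_mem _ (MvPolynomial.mapCoeffs_mem_vanishingIdeal _ hp))
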